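/- arXiv:1409.6782 — 2 statements merged into one kernel-verified Lean document; each statement's English description precedes it below -/
import Mathlib

section
/- Let g be a finite-dimensional restricted Lie algebra over a field k of characteristic p, and define rk_el(g) as the maximal dimension of an elementary subalgebra of g (an abelian subalgebra with trivial p-power map). For g = gl_2(k) with p > 2, the subalgebra of strictly upper triangular matrices is an elementary subalgebra of dimension 1, and the maximal dimension of an elementary subalgebra of gl_2 is 1; i.e., rk_el(gl_2) = 1. -/
/-!
A `p`-nilpotent `2 × 2` matrix already squares to zero (Cayley–Hamilton). If `A`, `B` commute
and `A`, `B`, `A + B` all square to zero, then `2AB = 0`, so `AB = 0` as `p ≠ 2`. Hence an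
elementary subspace `S` of `gl₂` satisfies `S * S = 0`. For `0 ≠ A ∈ S` pick `v` with `Av ≠ 0`;
then `v, Av` is a basis, so `B ↦ Bv` embeds `S` into the proper subspace `ker A`, and
`dim S ≤ 1`. The line through `E₀₁` realises this bound.
-/
open Module

theorem Matrix.pow_card_eq_zero_of_isNilpotent {n R : Type*} [Fintype n] [DecidableEq n]
    [CommRing R] [IsDomain R] {M : Matrix n n R} (hM : IsNilpotent M) :
    M ^ Fintype.card n = 0 := by
  have hchar : M.charpoly = Polynomial.X ^ Fintype.card n :=
    sub_eq_zero.mp (Matrix.isNilpotent_charpoly_sub_pow_of_isNilpotent hM).eq_zero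
  simpa [hchar] using M.aeval_self_charpoly

theorem Commute.mul_eq_zero_of_sq_eq_zero {R : Type*} [Ring R] {a b : R} (h2 : IsUnit (2 : R))
    (hab : Commute a b) (ha : a ^ 2 = 0) (hb : b ^ 2 = 0) (hsum : (a + b) ^ 2 = 0) :
    a * b = 0 := by
  rw [hab.add_sq, ha, hb, zero_add, add_zero, mul_assoc] at hsum
  exact h2.mul_right_eq_zero.mp hsum

theorem mul_eq_zero_of_mem_span_singleton {K R : Type*} [CommSemiring K] [Semiring R]
    [Algebra K R] {x a b : R} (hx : x * x = 0) (ha : a ∈ Submodule.span K {x})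
    (hb : b ∈ Submodule.span K {x}) : a * b = 0 := by
  obtain ⟨s, rfl⟩ := Submodule.mem_span_singleton.mp ha
  obtain ⟨t, rfl⟩ := Submodule.mem_span_singleton.mp hb
  rw [smul_mul_smul_comm, hx, smul_zero]

namespace Module.End

variable {K V : Type*} [Field K] [AddCommGroup V] [Module K V]

theorem linearIndependent_pair_apply {A : End K V} (hA : A * A = 0) {v : V} (hv : A v ≠ 0) :
    LinearIndependent K ![v, A v] := by
  refine LinearIndependent.pair_iff.mpr fun s t hst => ?_
  have hs : s • A v = 0 := by
    simpa [← Module.End.mul_apply, hA] using congrArg A hst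
  have hs0 : s = 0 := (smul_eq_zero.mp hs).resolve_right hv
  subst hs0
  exact ⟨rfl, (smul_eq_zero.mp (by simpa using hst)).resolve_right hv⟩

theorem eq_zero_of_apply_eq_zero_of_mul_eq_zero (hV : finrank K V = 2) {A B : End K V}
    (hAA : A * A = 0) (hBA : B * A = 0) {v : V} (hAv : A v ≠ 0) (hBv : B v = 0) : B = 0 := by
  have hspan := (linearIndependent_pair_apply hAA hAv).span_eq_top_of_card_eq_finrank
    (by rw [Fintype.card_fin, hV])
  refine LinearMap.ext_on_range hspan fun i => ?_
  fin_cases i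
  · simp [hBv]
  · simpa [← Module.End.mul_apply] using congrArg (· v) hBA

theorem finrank_le_one_of_mul_eq_zero [FiniteDimensional K V] (hV : finrank K V = 2)
    (S : Submodule K (End K V)) (hS : ∀ A ∈ S, ∀ B ∈ S, A * B = 0) : finrank K S ≤ 1 := by
  by_cases hbot : S = ⊥
  · rw [hbot, finrank_bot]; exact zero_le_one
  obtain ⟨A, hA, hA0⟩ := (Submodule.ne_bot_iff S).mp hbot
  obtain ⟨v, hAv⟩ : ∃ v, A v ≠ 0 := by
    by_contra! h
    exact hA0 (LinearMap.ext h)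
  let eval : S →ₗ[K] LinearMap.ker A :=
    LinearMap.codRestrict _ ((LinearMap.applyₗ v).comp S.subtype) fun B => by
      simpa [← Module.End.mul_apply] using congrArg (· v) (hS A hA B B.2)
  have heval : Function.Injective eval := by
    refine (injective_iff_map_eq_zero eval).mpr fun B hB => ?_
    have hBv : (B : End K V) v = 0 := congrArg Subtype.val hB
    exact Subtype.ext (eq_zero_of_apply_eq_zero_of_mul_eq_zero hV (hS A hA A hA)
      (hS B B.2 A hA) hAv hBv)
  have hker : finrank K (LinearMap.ker A) < 2 :=
    hV ▸ Submodule.finrank_lt (fun h => hA0 (LinearMap.ker_eq_top.mp h))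
  have := LinearMap.finrank_le_finrank_of_injective heval
  omega

end Module.End

theorem Matrix.finrank_le_one_of_mul_eq_zero {K : Type*} [Field K]
    (S : Submodule K (Matrix (Fin 2) (Fin 2) K)) (hS : ∀ A ∈ S, ∀ B ∈ S, A * B = 0) :
    finrank K S ≤ 1 := by
  rw [← LinearEquiv.finrank_map_eq Matrix.toLinAlgEquiv'.toLinearEquiv S]
  refine Module.End.finrank_le_one_of_mul_eq_zero (by simp) _ ?_
  rintro _ ⟨A, hA, rfl⟩ _ ⟨B, hB, rfl⟩
  simp [← map_mul, hS A hA B hB]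

theorem stmt12_general (k : Type*) [Field k] (p : ℕ) [CharP k p]
    (hp : 2 < p) :
    (∀ A ∈ Submodule.span k ({Matrix.single 0 1 (1 : k)} :
        Set (Matrix (Fin 2) (Fin 2) k)),
      ∀ B ∈ Submodule.span k ({Matrix.single 0 1 (1 : k)} :
        Set (Matrix (Fin 2) (Fin 2) k)),
        A * B - B * A = 0) ∧
    (∀ A ∈ Submodule.span k ({Matrix.single 0 1 (1 : k)} :
        Set (Matrix (Fin 2) (Fin 2) k)), A ^ p = 0) ∧
    Module.finrank k
      (Submodule.span k ({Matrix.single 0 1 (1 : k)} :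
        Set (Matrix (Fin 2) (Fin 2) k))) = 1 ∧
    (∀ S : Submodule k (Matrix (Fin 2) (Fin 2) k),
      (∀ A ∈ S, ∀ B ∈ S, A * B - B * A = 0) → (∀ A ∈ S, A ^ p = 0) →
        Module.finrank k S ≤ 1) := by
  have hE : (Matrix.single 0 1 1 : Matrix (Fin 2) (Fin 2) k) * Matrix.single 0 1 1 = 0 := by
    simp
  refine ⟨fun A hA B hB => by
      rw [mul_eq_zero_of_mem_span_singleton hE hA hB, mul_eq_zero_of_mem_span_singleton hE hB hA,
        sub_zero],
    fun A hA => pow_eq_zero_of_le hp.le (by rw [sq, mul_eq_zero_of_mem_span_singleton hE hA hA]),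
    finrank_span_singleton fun h => by simpa using congrFun₂ h 0 1, fun S hcomm hpow => ?_⟩
  have hsq : ∀ A ∈ S, A ^ 2 = 0 := fun A hA => by
    simpa using Matrix.pow_card_eq_zero_of_isNilpotent ⟨p, hpow A hA⟩
  have h2 : IsUnit (2 : Matrix (Fin 2) (Fin 2) k) := by
    have := (Ring.two_ne_zero (by rw [ringChar.eq k p]; omega)).isUnit.map
      (algebraMap k (Matrix (Fin 2) (Fin 2) k))
    rwa [map_ofNat] at this
  exact Matrix.finrank_le_one_of_mul_eq_zero S fun A hA B hB =>
    Commute.mul_eq_zero_of_sq_eq_zero h2 (sub_eq_zero.mp (hcomm A hA B hB)) (hsq A hA)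
      (hsq B hB) (hsq _ (S.add_mem hA hB))

/-- For `g = gl₂(k)` with `char k = p > 2`, the line spanned by
the strictly upper triangular matrix `E₀₁` is an elementary subalgebra of
dimension `1` (abelian with vanishing `p`-th matrix power), and every subspace
of `gl₂` consisting of pairwise commuting matrices with vanishing `p`-th power
has dimension at most `1`; i.e. `rk_el(gl₂) = 1`. -/
theorem stmt12 (k : Type*) [Field k] (p : ℕ) [Fact p.Prime] [CharP k p]
    (hp : 2 < p) :
    (∀ A ∈ Submodule.span k ({Matrix.single 0 1 (1 : k)} :
        Set (Matrix (Fin 2) (Fin 2) k)),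
      ∀ B ∈ Submodule.span k ({Matrix.single 0 1 (1 : k)} :
        Set (Matrix (Fin 2) (Fin 2) k)),
        A * B - B * A = 0) ∧
    (∀ A ∈ Submodule.span k ({Matrix.single 0 1 (1 : k)} :
        Set (Matrix (Fin 2) (Fin 2) k)), A ^ p = 0) ∧
    Module.finrank k
      (Submodule.span k ({Matrix.single 0 1 (1 : k)} :
        Set (Matrix (Fin 2) (Fin 2) k))) = 1 ∧
    (∀ S : Submodule k (Matrix (Fin 2) (Fin 2) k),
      (∀ A ∈ S, ∀ B ∈ S, A * B - B * A = 0) → (∀ A ∈ S, A ^ p = 0) →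
        Module.finrank k S ≤ 1) :=
  stmt12_general k p hp
end

section
/- Let k be a field of characteristic p > 0, A = k[x]/(x^p), and let M, N be finite-dimensional A-modules that are both free. Then M ⊗_k N, with x acting by the coproduct x ↦ x⊗1 + 1⊗x (i.e., x·(m⊗n) = xm⊗n + m⊗xn), is a free A-module. -/
/-!
Since `p = 0` in `k`, the element `t = x ⊗ 1 + 1 ⊗ x` of `A ⊗ A` satisfies `t ^ p = 0`, so
`x ⊗ 1 ↦ t`, `1 ⊗ a ↦ 1 ⊗ a` extends to an algebra automorphism of `A ⊗ A` (a shear, with inverse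
`x ⊗ 1 ↦ x ⊗ 1 - 1 ⊗ x`). It turns the diagonal action of `x` on `A ⊗ A` into multiplication by
`x ⊗ 1`, for which `A ⊗ A` is free over `A` of rank `dim A`. For `M ≅ A^m` and `N ≅ A^n` the diagonal
action on `M ⊗ N` is `m n` copies of the one on `A ⊗ A`.
-/

open Polynomial TensorProduct

/-- The truncated polynomial algebra `A = k[x]/(x^p)`. -/
abbrev TruncPoly (k : Type*) [Field k] (p : ℕ) : Type _ :=
  k[X] ⧸ Ideal.span {(X : k[X]) ^ p}

/-- The `k`-linear operator on an `A`-module `M` given by multiplication by the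
image of `x`. -/
noncomputable def xOp (k : Type*) [Field k] (p : ℕ)
    (M : Type*) [AddCommGroup M] [Module (TruncPoly k p) M]
    [Module k M] [IsScalarTower k (TruncPoly k p) M] : M →ₗ[k] M :=
  LinearMap.restrictScalars k
    (LinearMap.lsmul (TruncPoly k p) M (Ideal.Quotient.mk _ (X : k[X])))

namespace Module.End

variable {k : Type*} [CommSemiring k]

def Conjugate {V W : Type*} [AddCommMonoid V] [Module k V] [AddCommMonoid W] [Module k W]
    (f : Module.End k V) (g : Module.End k W) : Prop :=
  ∃ e : V ≃ₗ[k] W, ∀ v, e (f v) = g (e v)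

variable {U V W : Type*} [AddCommMonoid U] [Module k U] [AddCommMonoid V] [Module k V]
  [AddCommMonoid W] [Module k W]

theorem Conjugate.of_comp_eq {f : Module.End k V} {g : Module.End k W} (e : V ≃ₗ[k] W)
    (h : e.toLinearMap ∘ₗ f = g ∘ₗ e.toLinearMap) : Conjugate f g :=
  ⟨e, LinearMap.congr_fun h⟩

theorem Conjugate.trans {f : Module.End k U} {g : Module.End k V} {h : Module.End k W}
    (hfg : Conjugate f g) (hgh : Conjugate g h) : Conjugate f h := by
  obtain ⟨e₁, he₁⟩ := hfg
  obtain ⟨e₂, he₂⟩ := hgh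
  exact ⟨e₁ ≪≫ₗ e₂, fun u => by simp [he₁, he₂]⟩

theorem Conjugate.piMap {ι : Type*} {V W : ι → Type*} [∀ i, AddCommMonoid (V i)]
    [∀ i, Module k (V i)] [∀ i, AddCommMonoid (W i)] [∀ i, Module k (W i)]
    {f : ∀ i, Module.End k (V i)} {g : ∀ i, Module.End k (W i)}
    (h : ∀ i, Conjugate (f i) (g i)) : Conjugate (LinearMap.piMap f) (LinearMap.piMap g) := by
  choose e he using h
  exact ⟨LinearEquiv.piCongrRight e, fun v => funext fun i => he i (v i)⟩

theorem conjugate_mulLeft {R S : Type*} [Semiring R] [Algebra k R] [Semiring S] [Algebra k S]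
    (σ : R ≃ₐ[k] S) (r : R) :
    Conjugate (LinearMap.mulLeft k r) (LinearMap.mulLeft k (σ r)) :=
  ⟨σ.toLinearEquiv, map_mul σ r⟩

theorem conjugate_lsmul {A : Type*} [Semiring A] [Algebra k A] [Module A V] [IsScalarTower k A V]
    [Module A W] [IsScalarTower k A W] (e : V ≃ₗ[A] W) (x : A) :
    Conjugate (Algebra.lsmul k k V x) (Algebra.lsmul k k W x) :=
  ⟨e.restrictScalars k, e.map_smul x⟩

end Module.End

open Module.End

section DiagonalAction

variable {k A : Type*} [CommSemiring k] [CommSemiring A] [Algebra k A]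

theorem piMap_lsmul {ι : Type*} {V : ι → Type*} [∀ i, AddCommMonoid (V i)]
    [∀ i, Module A (V i)] [∀ i, Module k (V i)] [∀ i, IsScalarTower k A (V i)] (x : A) :
    LinearMap.piMap (fun i => Algebra.lsmul k k (V i) x) = Algebra.lsmul k k (∀ i, V i) x :=
  rfl

variable (k) in
theorem exists_conjugate_lsmul_fin (W : Type*) [AddCommMonoid W] [Module A W] [Module k W]
    [IsScalarTower k A W] [Module.Free A W] [Module.Finite A W] (x : A) :
    ∃ n, Conjugate (Algebra.lsmul k k W x) (Algebra.lsmul k k (Fin n → A) x) :=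
  ⟨_, conjugate_lsmul ((Module.Free.chooseBasis A W).reindex (Fintype.equivFin _)).equivFun x⟩

variable (k) in
def diagSMul (x : A) (M N : Type*)
    [AddCommMonoid M] [Module A M] [Module k M] [IsScalarTower k A M]
    [AddCommMonoid N] [Module A N] [Module k N] [IsScalarTower k A N] :
    Module.End k (M ⊗[k] N) :=
  TensorProduct.map (Algebra.lsmul k k M x) LinearMap.id +
    TensorProduct.map LinearMap.id (Algebra.lsmul k k N x)

variable {M N M' N' : Type*}
  [AddCommMonoid M] [Module A M] [Module k M] [IsScalarTower k A M]
  [AddCommMonoid N] [Module A N] [Module k N] [IsScalarTower k A N]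
  [AddCommMonoid M'] [Module A M'] [Module k M'] [IsScalarTower k A M']
  [AddCommMonoid N'] [Module A N'] [Module k N'] [IsScalarTower k A N']

@[simp]
theorem diagSMul_tmul (x : A) (m : M) (n : N) :
    diagSMul k x M N (m ⊗ₜ n) = (x • m) ⊗ₜ n + m ⊗ₜ (x • n) := by
  simp [diagSMul]

theorem conjugate_diagSMul (x : A) (eM : M ≃ₗ[A] M') (eN : N ≃ₗ[A] N') :
    Conjugate (diagSMul k x M N) (diagSMul k x M' N') := by
  refine .of_comp_eq (congr (eM.restrictScalars k) (eN.restrictScalars k))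
    (TensorProduct.ext' fun m n => ?_)
  simp

theorem conjugate_diagSMul_piLeft (ι : Type*) [Fintype ι] [DecidableEq ι] (x : A) :
    Conjugate (diagSMul k x (ι → M) N) (LinearMap.piMap fun _ : ι => diagSMul k x M N) := by
  refine .of_comp_eq (piLeft k N fun _ : ι => M) (TensorProduct.ext' fun m n => ?_)
  ext i
  simp [add_comm]

theorem conjugate_diagSMul_piRight (ι : Type*) [Fintype ι] [DecidableEq ι] (x : A) :
    Conjugate (diagSMul k x M (ι → N)) (LinearMap.piMap fun _ : ι => diagSMul k x M N) := by
  refine .of_comp_eq (piRight k k M fun _ : ι => N) (TensorProduct.ext' fun m n => ?_)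
  ext i
  simp

theorem diagSMul_self (x : A) :
    diagSMul k x A A = LinearMap.mulLeft k (x ⊗ₜ[k] 1 + 1 ⊗ₜ x) := by
  ext a b
  simp [add_mul]

theorem mulLeft_tmul_one {B : Type*} [Semiring B] [Algebra k B] (x : A) :
    LinearMap.mulLeft k (x ⊗ₜ[k] (1 : B)) = Algebra.lsmul k k (A ⊗[k] B) x := by
  ext z
  simp [Algebra.smul_def]

theorem conjugate_diagSMul_self {x : A} (σ : A ⊗[k] A ≃ₐ[k] A ⊗[k] A)
    (hσ : σ (x ⊗ₜ 1 + 1 ⊗ₜ x) = x ⊗ₜ 1) :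
    Conjugate (diagSMul k x A A) (Algebra.lsmul k k (A ⊗[k] A) x) := by
  have h := conjugate_mulLeft σ (x ⊗ₜ 1 + 1 ⊗ₜ x)
  rwa [hσ, mulLeft_tmul_one, ← diagSMul_self] at h

theorem exists_conjugate_diagSMul [Module.Free k A] (hA : Module.Finite k A) {x : A}
    (σ : A ⊗[k] A ≃ₐ[k] A ⊗[k] A) (hσ : σ (x ⊗ₜ 1 + 1 ⊗ₜ x) = x ⊗ₜ 1) (M N : Type*)
    [AddCommMonoid M] [Module A M] [Module k M] [IsScalarTower k A M]
    [AddCommMonoid N] [Module A N] [Module k N] [IsScalarTower k A N]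
    [Module.Free A M] [Module.Finite A M] [Module.Free A N] [Module.Finite A N] :
    ∃ n, Conjugate (diagSMul k x M N) (Algebra.lsmul k k (Fin n → A) x) := by
  let ιM := Module.Free.ChooseBasisIndex A M
  let ιN := Module.Free.ChooseBasisIndex A N
  have h_free : Conjugate (diagSMul k x M N) (diagSMul k x (ιM → A) (ιN → A)) :=
    conjugate_diagSMul x (Module.Free.chooseBasis A M).equivFun
      (Module.Free.chooseBasis A N).equivFun
  have h_split : Conjugate (diagSMul k x (ιM → A) (ιN → A))
      (Algebra.lsmul k k (ιM → ιN → A ⊗[k] A) x) := by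
    refine (conjugate_diagSMul_piLeft ιM x).trans ?_
    rw [← piMap_lsmul]
    refine .piMap fun _ => (conjugate_diagSMul_piRight ιN x).trans ?_
    rw [← piMap_lsmul]
    exact .piMap fun _ => conjugate_diagSMul_self σ hσ
  obtain ⟨n, h_fin⟩ := exists_conjugate_lsmul_fin k (ιM → ιN → A ⊗[k] A) x
  exact ⟨n, h_free.trans (h_split.trans h_fin)⟩

end DiagonalAction

theorem Commute.add_pow_char_of_algebra (k : Type*) {R : Type*} [CommRing k] [Semiring R]
    [Algebra k R] {p : ℕ} [Fact p.Prime] [CharP k p] {a b : R} (h : Commute a b) :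
    (a + b) ^ p = a ^ p + b ^ p := by
  have hp : (p : R) = 0 := by
    rw [← map_natCast (algebraMap k R), CharP.cast_eq_zero, map_zero]
  rw [h.add_pow_prime_eq Fact.out, hp]
  simp

/- `TruncPoly k p` is by definition `AdjoinRoot (X ^ p)`, and the shear is built on the latter:
on the quotient `TruncPoly k p`, instance search finds additive and `k`-module structures that
agree with those underlying its `k`-algebra structure only after unfolding, which breaks
rewriting in `TruncPoly k p ⊗[k] TruncPoly k p`. For the same reason `exists_conjugate_diagSMul`
takes the finiteness of `A` as an explicit argument. -/
namespace AdjoinRoot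

variable {k : Type*} [Field k] {p : ℕ} [Fact p.Prime] [CharP k p]

local notation "A" => AdjoinRoot (X ^ p : k[X])

noncomputable def shear (c : k) : A ⊗[k] A →ₐ[k] A ⊗[k] A :=
  Algebra.TensorProduct.productMap
    (liftAlgHom _ (Algebra.ofId k _) (root (X ^ p) ⊗ₜ 1 + 1 ⊗ₜ (c • root (X ^ p))) (by
      rw [eval₂_X_pow, (Commute.all _ _).add_pow_char_of_algebra k,
        Algebra.TensorProduct.tmul_pow, Algebra.TensorProduct.tmul_pow, _root_.smul_pow,
        ← mk_X, ← map_pow, mk_self]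
      simp))
    Algebra.TensorProduct.includeRight

theorem shear_root_tmul_one (c : k) :
    shear c (root (X ^ p) ⊗ₜ 1) = root (X ^ p) ⊗ₜ 1 + 1 ⊗ₜ (c • root (X ^ p)) := by
  rw [shear, Algebra.TensorProduct.productMap_apply_tmul, map_one, mul_one, liftAlgHom_root]

theorem shear_one_tmul (c : k) (a : A) : shear c (1 ⊗ₜ a) = 1 ⊗ₜ a := by
  rw [shear, Algebra.TensorProduct.productMap_apply_tmul, map_one, one_mul]
  rfl

theorem shear_comp (c d : k) : (shear c).comp (shear d) = shear (p := p) (c + d) := by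
  refine Algebra.TensorProduct.ext (algHom_ext ?_) (algHom_ext ?_)
  · simp [shear_root_tmul_one, shear_one_tmul, add_smul, tmul_add, add_assoc]
  · simp [shear_one_tmul]

theorem shear_zero : shear (p := p) (0 : k) = AlgHom.id k (A ⊗[k] A) := by
  refine Algebra.TensorProduct.ext (algHom_ext ?_) (algHom_ext ?_)
  · simp [shear_root_tmul_one]
  · simp [shear_one_tmul]

noncomputable def shearEquiv (c : k) : A ⊗[k] A ≃ₐ[k] A ⊗[k] A :=
  .ofAlgHom (shear c) (shear (-c)) (by rw [shear_comp, add_neg_cancel, shear_zero])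
    (by rw [shear_comp, neg_add_cancel, shear_zero])

theorem shearEquiv_neg_one :
    shearEquiv (-1 : k) (root (X ^ p) ⊗ₜ 1 + 1 ⊗ₜ root (X ^ p)) =
      (root (X ^ p) ⊗ₜ 1 : A ⊗[k] A) := by
  rw [shearEquiv, AlgEquiv.ofAlgHom_apply, map_add, shear_root_tmul_one, shear_one_tmul,
    neg_one_smul, add_assoc, ← tmul_add, neg_add_cancel, tmul_zero, add_zero]

end AdjoinRoot

/-- If `M` and `N` are finite-dimensional free modules over
`A = k[x]/(x^p)`, then `M ⊗_k N`, with `x` acting via the coproduct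
`x ↦ x ⊗ 1 + 1 ⊗ x`, is a free `A`-module: there is a `k`-linear isomorphism
`M ⊗ N ≅ A^n` carrying the operator `x⊗1 + 1⊗x` to multiplication by `x`. -/
theorem stmt17 (k : Type*) [Field k] (p : ℕ) [Fact p.Prime] [CharP k p]
    (M : Type*) [AddCommGroup M] [Module (TruncPoly k p) M]
    [Module k M] [IsScalarTower k (TruncPoly k p) M] [FiniteDimensional k M]
    (N : Type*) [AddCommGroup N] [Module (TruncPoly k p) N]
    [Module k N] [IsScalarTower k (TruncPoly k p) N] [FiniteDimensional k N]
    (hM : Module.Free (TruncPoly k p) M) (hN : Module.Free (TruncPoly k p) N) :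
    ∃ (n : ℕ) (e : M ⊗[k] N ≃ₗ[k] (Fin n → TruncPoly k p)),
      ∀ z : M ⊗[k] N,
        e ((TensorProduct.map (xOp k p M) (LinearMap.id : N →ₗ[k] N)
              + TensorProduct.map (LinearMap.id : M →ₗ[k] M) (xOp k p N)) z) =
          (Ideal.Quotient.mk (Ideal.span {(X : k[X]) ^ p}) X) • e z := by
  have := Module.Finite.of_restrictScalars_finite k (TruncPoly k p) M
  have := Module.Finite.of_restrictScalars_finite k (TruncPoly k p) N
  obtain ⟨n, e, he⟩ := exists_conjugate_diagSMul (A := TruncPoly k p)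
    (monic_X_pow p).finite_quotient (AdjoinRoot.shearEquiv (-1))
    AdjoinRoot.shearEquiv_neg_one M N
  exact ⟨n, e, he⟩
end
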